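/- Quantum smooth Hirschman-Beckner uncertainty principle, commutative finite-dimensional case: assume k > 0, F is a k-transform, F* ∘ F = k • id, and d i ≥ 1 and τ j ≥ 1 for all i, j. Set d₁ = min_i d i, τ₁ = min_j τ j, D = ∑ i, d i, T = ∑ j, τ j, and f(t) = 4 t * log t + 2 t. Then for every nonzero x : Fin n → ℂ, all ε, η ∈ [0,1], and all reals 1 ≤ p < ∞ and 1 ≤ q < ∞: H_ε^{p,d}(|x|²)/‖x‖_{2,d}² + H_η^{q,τ}(|F x|²)/‖F x‖_{2,τ}² ≥ −4 log ‖x‖_{2,d} − (f(‖x‖_∞ + 1)/‖x‖_{2,d}²) * d₁^(−1/p) * D * ε − (f(‖F x‖_∞ + 1)/‖F x‖_{2,τ}²) * τ₁^(−1/q) * T * η. -/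

import Mathlib

/-!
For `u` with `‖u‖_{2,d} = 1` put `v = F u / √k`. The entire function
`Φ z = ∑ j, τ j * F (u |u| ^ (1 - z)) j * (v̄ |v| ^ (1 - z)) j` is bounded by `1` on `Re z = 0`
(because `‖F y‖_∞ ≤ ‖y‖_{1,d}`), by `√k` on `Re z = 1` (Plancherel and Cauchy–Schwarz), and
`Φ 1 = √k`. By the three lines theorem `Re Φ t ≤ √k ^ t` on `[0, 1]`, with equality at `t = 1`,
so the derivatives at `1` compare: `√k log √k ≤ Re Φ'(1) = √k (H_d(|u|²) + H_τ(|v|²)) / 2`.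
Rescaling gives `H_d(|x|²)/‖x‖² + H_τ(|F x|²)/‖F x‖² ≥ -4 log ‖x‖_{2,d}`.
Smoothing costs the two error terms: `‖x - y‖_{p,d} ≤ ε` forces `|x i - y i| ≤ ε d₁^(-1/p) ≤ 1`, and
`t ↦ t² log t²` is `f R`-Lipschitz on `[0, R]`, `R = ‖x‖_∞ + 1`.
-/

open Finset

/-- Weighted `p`-norm on `Fin n → ℂ` with weight `d`. -/
noncomputable def wnorm {n : ℕ} (d : Fin n → ℝ) (p : ℝ) (x : Fin n → ℂ) : ℝ :=
  (∑ i, d i * ‖x i‖ ^ p) ^ (1 / p)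

/-- Sup (infinity) norm on `Fin n → ℂ`. -/
noncomputable def inorm {n : ℕ} (x : Fin n → ℂ) : ℝ :=
  ⨆ i, ‖x i‖

/-- `G` is the adjoint of `F` with respect to the weighted inner products with
weights `d` and `τ`. -/
def IsAdjointPair {n m : ℕ} (d : Fin n → ℝ) (τ : Fin m → ℝ)
    (F : (Fin n → ℂ) →ₗ[ℂ] (Fin m → ℂ)) (G : (Fin m → ℂ) →ₗ[ℂ] (Fin n → ℂ)) : Prop :=
  ∀ (x : Fin n → ℂ) (u : Fin m → ℂ),
    ∑ j, (τ j : ℂ) * (starRingEnd ℂ) (F x j) * u j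
      = ∑ i, (d i : ℂ) * (starRingEnd ℂ) (x i) * G u i

/-- Von Neumann entropy of `|x|²` with respect to the weight `d`
(the convention `0 * log 0 = 0` holds since `Real.log 0 = 0`). -/
noncomputable def went {n : ℕ} (d : Fin n → ℝ) (x : Fin n → ℂ) : ℝ :=
  -∑ i, d i * ‖x i‖ ^ 2 * Real.log (‖x i‖ ^ 2)

/-- The `(p, ε)` smooth entropy of `|x|²` with respect to the weight `d`. -/
noncomputable def smoothEnt {n : ℕ} (d : Fin n → ℝ) (p ε : ℝ) (x : Fin n → ℂ) : ℝ :=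
  sInf { e : ℝ | ∃ y : Fin n → ℂ, wnorm d p (x - y) ≤ ε ∧ e = went d y }

open Complex.HadamardThreeLines

variable {n m : ℕ}

lemma wnorm_two_sq (d : Fin n → ℝ) (hd : ∀ i, 0 ≤ d i) (x : Fin n → ℂ) :
    wnorm d 2 x ^ 2 = ∑ i, d i * ‖x i‖ ^ 2 := by
  have h0 : 0 ≤ ∑ i, d i * ‖x i‖ ^ (2 : ℝ) := sum_nonneg fun i _ => by positivity [hd i]
  rw [wnorm, ← Real.rpow_natCast, ← Real.rpow_mul h0]
  norm_num

lemma wnorm_two_pos {d : Fin n → ℝ} (hd : ∀ i, 0 < d i) {x : Fin n → ℂ} (hx : x ≠ 0) :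
    0 < wnorm d 2 x := by
  obtain ⟨i, hi⟩ := Function.ne_iff.mp hx
  refine Real.rpow_pos_of_pos (sum_pos' (fun j _ => by positivity [hd j]) ⟨i, mem_univ i, ?_⟩) _
  exact mul_pos (hd i) (Real.rpow_pos_of_pos (norm_pos_iff.mpr hi) _)

lemma wnorm_one (d : Fin n → ℝ) (x : Fin n → ℂ) : wnorm d 1 x = ∑ i, d i * ‖x i‖ := by
  simp [wnorm]

lemma inorm_nonneg (x : Fin n → ℂ) : 0 ≤ inorm x :=
  Real.iSup_nonneg fun _ => norm_nonneg _

lemma norm_le_inorm (x : Fin n → ℂ) (i : Fin n) : ‖x i‖ ≤ inorm x :=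
  le_ciSup (f := fun i => ‖x i‖) (Set.finite_range _).bddAbove i

lemma norm_apply_le_sum_of_inorm_le {d : Fin n → ℝ} {F : (Fin n → ℂ) →ₗ[ℂ] (Fin m → ℂ)}
    (hF1 : ∀ x, inorm (F x) ≤ wnorm d 1 x) (y : Fin n → ℂ) (j : Fin m) :
    ‖F y j‖ ≤ ∑ i, d i * ‖y i‖ :=
  (norm_le_inorm _ j).trans ((hF1 y).trans_eq (wnorm_one d y))

lemma IsAdjointPair.sum_mul_conj {d : Fin n → ℝ} {τ : Fin m → ℝ}
    {F : (Fin n → ℂ) →ₗ[ℂ] (Fin m → ℂ)} {G : (Fin m → ℂ) →ₗ[ℂ] (Fin n → ℂ)}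
    (hadj : IsAdjointPair d τ F G) (y : Fin n → ℂ) (w : Fin m → ℂ) :
    ∑ j, (τ j : ℂ) * F y j * (starRingEnd ℂ) (w j)
      = ∑ i, (d i : ℂ) * y i * (starRingEnd ℂ) (G w i) := by
  simpa only [map_sum, map_mul, Complex.conj_conj, Complex.conj_ofReal]
    using congrArg (starRingEnd ℂ) (hadj y w)

lemma IsAdjointPair.sum_mul_norm_sq {d : Fin n → ℝ} {τ : Fin m → ℝ} {k : ℝ}
    {F : (Fin n → ℂ) →ₗ[ℂ] (Fin m → ℂ)} {G : (Fin m → ℂ) →ₗ[ℂ] (Fin n → ℂ)}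
    (hadj : IsAdjointPair d τ F G) (hiso : ∀ y, G (F y) = (k : ℂ) • y) (y : Fin n → ℂ) :
    ∑ j, τ j * ‖F y j‖ ^ 2 = k * ∑ i, d i * ‖y i‖ ^ 2 := by
  have h := hadj y (F y)
  simp only [hiso, Pi.smul_apply, smul_eq_mul, mul_left_comm _ (k : ℂ), mul_assoc,
    Complex.conj_mul', ← mul_sum] at h
  exact_mod_cast h

lemma went_eq_sum_negMulLog (d : Fin n → ℝ) (y : Fin n → ℂ) :
    went d y = ∑ i, d i * Real.negMulLog (‖y i‖ ^ 2) := by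
  simp only [went, Real.negMulLog, ← sum_neg_distrib]
  exact sum_congr rfl fun i _ => by ring

lemma went_smul (d : Fin n → ℝ) (c : ℝ) (y : Fin n → ℂ) :
    went d ((c : ℂ) • y) = c ^ 2 * (went d y - Real.log (c ^ 2) * ∑ i, d i * ‖y i‖ ^ 2) := by
  simp only [went_eq_sum_negMulLog, Pi.smul_apply, smul_eq_mul, norm_mul, Complex.norm_real,
    Real.norm_eq_abs, mul_pow, sq_abs, Real.negMulLog_mul, mul_sum, ← sum_sub_distrib]
  unfold Real.negMulLog
  exact sum_congr rfl fun i _ => by ring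

lemma sum_mul_neg_log_norm_mul_conj (d : Fin n → ℝ) (u : Fin n → ℂ) :
    ∑ i, (d i : ℂ) * (-(Real.log ‖u i‖ : ℂ) * u i) * (starRingEnd ℂ) (u i)
      = ((went d u / 2 : ℝ) : ℂ) := by
  have hterm : ∀ i, (d i : ℂ) * (-(Real.log ‖u i‖ : ℂ) * u i) * (starRingEnd ℂ) (u i)
      = ((-(d i * ‖u i‖ ^ 2 * Real.log (‖u i‖ ^ 2)) / 2 : ℝ) : ℂ) := by
    intro i
    rw [Real.log_pow]
    push_cast
    linear_combination (-(d i : ℂ) * Real.log ‖u i‖) * Complex.mul_conj' (u i)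
  rw [sum_congr rfl fun i _ => hterm i, ← Complex.ofReal_sum, went, ← sum_neg_distrib, sum_div]

lemma sum_mul_norm_sq_smul (d : Fin n → ℝ) (c : ℝ) (y : Fin n → ℂ) :
    ∑ i, d i * ‖((c : ℂ) • y) i‖ ^ 2 = c ^ 2 * ∑ i, d i * ‖y i‖ ^ 2 := by
  simp only [Pi.smul_apply, smul_eq_mul, norm_mul, Complex.norm_real, Real.norm_eq_abs, mul_pow,
    sq_abs, mul_sum]
  exact sum_congr rfl fun i _ => by ring

lemma IsAdjointPair.sum_mul_norm_sq_inv_sqrt_smul {d : Fin n → ℝ} {τ : Fin m → ℝ} {k : ℝ}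
    {F : (Fin n → ℂ) →ₗ[ℂ] (Fin m → ℂ)} {G : (Fin m → ℂ) →ₗ[ℂ] (Fin n → ℂ)}
    (hadj : IsAdjointPair d τ F G) (hiso : ∀ y, G (F y) = (k : ℂ) • y) (hk : 0 < k)
    (y : Fin n → ℂ) :
    ∑ j, τ j * ‖((√k : ℂ)⁻¹ • F y) j‖ ^ 2 = ∑ i, d i * ‖y i‖ ^ 2 := by
  rw [← Complex.ofReal_inv, sum_mul_norm_sq_smul, hadj.sum_mul_norm_sq hiso, inv_pow,
    Real.sq_sqrt hk.le, inv_mul_cancel_left₀ hk.ne']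

lemma hasDerivAt_sq_mul_log_sq {t : ℝ} (ht : t ≠ 0) :
    HasDerivAt (fun s : ℝ => s ^ 2 * Real.log (s ^ 2)) (4 * t * Real.log t + 2 * t) t := by
  refine ((hasDerivAt_pow 2 t).mul ((hasDerivAt_pow 2 t).log (pow_ne_zero 2 ht))).congr_deriv ?_
  rw [Real.log_pow]
  field_simp
  push_cast
  ring

lemma abs_four_mul_mul_log_add_two_mul_le {t R : ℝ} (ht : 0 < t) (htR : t ≤ R) (hR : 1 ≤ R) :
    |4 * t * Real.log t + 2 * t| ≤ 4 * R * Real.log R + 2 * R := by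
  have hRlog : 0 ≤ R * Real.log R := Real.mul_log_nonneg hR
  rcases le_or_gt t 1 with ht1 | ht1
  · -- `t log t = 2 √t (√t log √t) ≥ 2 √t (√t - 1) ≥ -1/2`
    have hs := Real.mul_self_sqrt ht.le
    have hneg := Real.negMulLog_le_one_sub_self (Real.sqrt_nonneg t)
    rw [Real.negMulLog] at hneg
    have hsplit : t * Real.log t = 2 * √t * (√t * Real.log √t) := by
      rw [Real.log_sqrt ht.le]
      linear_combination (-Real.log t) * hs
    have hlow : 2 * t - 2 * √t ≤ t * Real.log t := by
      rw [hsplit]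
      nlinarith [mul_le_mul_of_nonneg_left hneg (by positivity : 0 ≤ 2 * √t)]
    have hmul : t * Real.log t ≤ 0 := Real.mul_log_nonpos ht.le ht1
    rw [abs_le]
    constructor
    · nlinarith [sq_nonneg (√t - 1 / 2)]
    · nlinarith
  · have hmono : t * Real.log t ≤ R * Real.log R :=
      mul_le_mul htR (Real.log_le_log ht htR) (Real.log_nonneg ht1.le) (by linarith)
    rw [abs_of_nonneg (by nlinarith [Real.mul_log_nonneg ht1.le])]
    linarith

lemma abs_sq_mul_log_sq_sub_le {R a b : ℝ} (hR : 1 ≤ R) (ha : a ∈ Set.Icc 0 R)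
    (hb : b ∈ Set.Icc 0 R) :
    |b ^ 2 * Real.log (b ^ 2) - a ^ 2 * Real.log (a ^ 2)|
      ≤ (4 * R * Real.log R + 2 * R) * |b - a| := by
  wlog hab : a ≤ b generalizing a b
  · rw [abs_sub_comm, abs_sub_comm b]
    exact this hb ha (le_of_not_ge hab)
  set f : ℝ → ℝ := fun s => s ^ 2 * Real.log (s ^ 2)
  set C := 4 * R * Real.log R + 2 * R
  have hcont : ContinuousOn f (Set.Icc 0 R) :=
    (Real.continuous_mul_log.comp (continuous_pow 2)).continuousOn
  have hderiv : ∀ t ∈ interior (Set.Icc 0 R), HasDerivAt f (4 * t * Real.log t + 2 * t) t := by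
    intro t ht
    rw [interior_Icc] at ht
    exact hasDerivAt_sq_mul_log_sq ht.1.ne'
  have hbound : ∀ t ∈ interior (Set.Icc 0 R), |deriv f t| ≤ C := by
    intro t ht
    rw [(hderiv t ht).deriv]
    rw [interior_Icc] at ht
    exact abs_four_mul_mul_log_add_two_mul_le ht.1 ht.2.le hR
  have hdiff : DifferentiableOn ℝ f (interior (Set.Icc 0 R)) :=
    fun t ht => (hderiv t ht).differentiableAt.differentiableWithinAt
  have hup := (convex_Icc 0 R).image_sub_le_mul_sub_of_deriv_le hcont hdiff
    (fun t ht => (le_abs_self _).trans (hbound t ht)) a ha b hb hab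
  have hlow := (convex_Icc 0 R).mul_sub_le_image_sub_of_le_deriv hcont hdiff
    (fun t ht => neg_le_of_abs_le (hbound t ht)) a ha b hb hab
  rw [abs_of_nonneg (sub_nonneg.mpr hab), abs_le]
  constructor <;> linarith

lemma norm_le_of_wnorm_le {d : Fin n → ℝ} (hd : ∀ i, 0 < d i) {p ε : ℝ} (hp : 0 < p)
    {z : Fin n → ℂ} (hz : wnorm d p z ≤ ε) (i : Fin n) :
    ‖z i‖ ≤ ε * (⨅ j, d j) ^ (-(1 / p)) := by
  have : Nonempty (Fin n) := ⟨i⟩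
  have hδ : 0 < ⨅ j, d j := by
    obtain ⟨j, hj⟩ := exists_eq_ciInf_of_finite (f := d)
    rw [← hj]
    exact hd j
  set δ := ⨅ j, d j
  have hterm : δ * ‖z i‖ ^ p ≤ ∑ j, d j * ‖z j‖ ^ p :=
    (mul_le_mul_of_nonneg_right (ciInf_le (Set.finite_range d).bddBelow i) (by positivity)).trans
      (single_le_sum (f := fun j => d j * ‖z j‖ ^ p) (fun j _ => by positivity [hd j]) (mem_univ i))
  have h := (Real.rpow_le_rpow (by positivity) hterm (by positivity : 0 ≤ 1 / p)).trans hz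
  rw [Real.mul_rpow hδ.le (by positivity), one_div, Real.rpow_rpow_inv (norm_nonneg _) hp.ne',
    ← le_div_iff₀' (by positivity), div_eq_mul_inv, ← Real.rpow_neg hδ.le] at h
  simpa only [one_div] using h

lemma went_le_went_add_of_norm_sub_le {d : Fin n → ℝ} (hd : ∀ i, 0 ≤ d i) {R δ : ℝ} (hR : 1 ≤ R)
    {x y : Fin n → ℂ} (hx : ∀ i, ‖x i‖ ≤ R) (hy : ∀ i, ‖y i‖ ≤ R)
    (hxy : ∀ i, ‖x i - y i‖ ≤ δ) :
    went d x ≤ went d y + (4 * R * Real.log R + 2 * R) * δ * ∑ i, d i := by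
  have hdiff : went d x - went d y
      = ∑ i, d i * (‖y i‖ ^ 2 * Real.log (‖y i‖ ^ 2) - ‖x i‖ ^ 2 * Real.log (‖x i‖ ^ 2)) := by
    simp only [went, mul_sub, sum_sub_distrib, mul_assoc]
    ring
  have hterm : ∀ i, d i * (‖y i‖ ^ 2 * Real.log (‖y i‖ ^ 2) - ‖x i‖ ^ 2 * Real.log (‖x i‖ ^ 2))
      ≤ d i * ((4 * R * Real.log R + 2 * R) * δ) := by
    intro i
    refine mul_le_mul_of_nonneg_left ((le_abs_self _).trans ?_) (hd i)
    refine (abs_sq_mul_log_sq_sub_le hR ⟨norm_nonneg _, hx i⟩ ⟨norm_nonneg _, hy i⟩).trans ?_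
    refine mul_le_mul_of_nonneg_left ?_ (by nlinarith [Real.mul_log_nonneg hR])
    exact (abs_norm_sub_norm_le _ _).trans (norm_sub_rev (y i) (x i) ▸ hxy i)
  have := sum_le_sum fun i (_ : i ∈ univ) => hterm i
  rw [← hdiff, ← sum_mul, mul_comm] at this
  linarith

lemma went_sub_le_smoothEnt (hn : 0 < n) {d : Fin n → ℝ} (hd1 : ∀ i, 1 ≤ d i) {p ε : ℝ}
    (hp : 1 ≤ p) (hε : ε ∈ Set.Icc (0 : ℝ) 1) (x : Fin n → ℂ) :
    went d x - (4 * (inorm x + 1) * Real.log (inorm x + 1) + 2 * (inorm x + 1))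
        * (⨅ i, d i) ^ (-(1 / p)) * (∑ i, d i) * ε ≤ smoothEnt d p ε x := by
  have : Nonempty (Fin n) := Fin.pos_iff_nonempty.mp hn
  have hd : ∀ i, 0 < d i := fun i => one_pos.trans_le (hd1 i)
  have hp0 : 0 < p := one_pos.trans_le hp
  set R := inorm x + 1
  set δ := ε * (⨅ i, d i) ^ (-(1 / p))
  have hδ : δ ≤ 1 := mul_le_one₀ hε.2 (by positivity [le_ciInf hd1])
    (Real.rpow_le_one_of_one_le_of_nonpos (le_ciInf hd1) (by simp [hp0.le]))
  refine le_csInf ⟨went d x, x, by simpa [wnorm, hp0.ne'] using hε.1, rfl⟩ ?_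
  rintro _ ⟨y, hy, rfl⟩
  have hxy : ∀ i, ‖x i - y i‖ ≤ δ := norm_le_of_wnorm_le hd hp0 hy
  have hx : ∀ i, ‖x i‖ ≤ R := fun i => by linarith [norm_le_inorm x i]
  have hy : ∀ i, ‖y i‖ ≤ R := fun i => by
    linarith [norm_le_inorm x i, norm_sub_norm_le (y i) (x i), norm_sub_rev (y i) (x i), hxy i]
  have := went_le_went_add_of_norm_sub_le (fun i => (hd i).le)
    (by linarith [inorm_nonneg x]) hx hy hxy
  linarith

lemma mul_log_le_re_of_norm_le_rpow {g : ℂ → ℂ} {D : ℂ} {c : ℝ} (hc : 0 < c)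
    (hg : HasDerivAt g D 1) (hg1 : g 1 = c) (hle : ∀ t ∈ Set.Icc (0 : ℝ) 1, ‖g t‖ ≤ c ^ t) :
    c * Real.log c ≤ D.re := by
  set f : ℝ → ℝ := fun t => (g t).re - c ^ t
  have hmax : IsLocalMaxOn f (Set.Icc 0 1) 1 := by
    refine IsMaxOn.localize fun t ht => ?_
    simp only [Set.mem_ofPred_eq, f, Complex.ofReal_one, hg1, Complex.ofReal_re, Real.rpow_one,
      sub_self, sub_nonpos]
    exact (Complex.re_le_norm _).trans (hle t ht)
  have hf : HasDerivAt f (D.re - c ^ (1 : ℝ) * Real.log c) 1 :=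
    (HasDerivAt.real_of_complex (by simpa using hg)).sub
      (Real.hasStrictDerivAt_const_rpow hc 1).hasDerivAt
  have hcone : (0 : ℝ) - 1 ∈ posTangentConeAt (Set.Icc (0 : ℝ) 1) 1 :=
    sub_mem_posTangentConeAt_of_segment_subset (by simp [segment_symm, segment_eq_Icc])
  have := hmax.hasFDerivWithinAt_nonpos hf.hasDerivWithinAt.hasFDerivWithinAt hcone
  simp only [Real.rpow_one, zero_sub, ContinuousLinearMap.toSpanSingleton_apply, smul_eq_mul,
    neg_mul, one_mul, neg_sub, tsub_le_iff_right, zero_add] at this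
  linarith

/-- The analytic family `z ↦ u |u| ^ (1 - z)`: it has modulus `|u|²` on `Re z = 0` and equals `u`
at `z = 1`. -/
noncomputable def interpFamily (u : Fin n → ℂ) (z : ℂ) : Fin n → ℂ :=
  fun i => u i * Complex.exp ((1 - z) * Real.log ‖u i‖)

@[simp]
lemma interpFamily_one (u : Fin n → ℂ) : interpFamily u 1 = u := by
  ext i
  simp [interpFamily]

lemma norm_interpFamily (u : Fin n → ℂ) (z : ℂ) (i : Fin n) :
    ‖interpFamily u z i‖ = ‖u i‖ * Real.exp ((1 - z.re) * Real.log ‖u i‖) := by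
  simp [interpFamily, Complex.norm_exp, Complex.mul_re]

lemma norm_interpFamily_of_re_eq_zero (u : Fin n → ℂ) {z : ℂ} (hz : z.re = 0) (i : Fin n) :
    ‖interpFamily u z i‖ = ‖u i‖ ^ 2 := by
  rw [norm_interpFamily, hz, sub_zero, one_mul]
  rcases (norm_nonneg (u i)).eq_or_lt with h | h
  · simp [← h]
  · rw [Real.exp_log h, sq]

lemma norm_interpFamily_of_re_eq_one (u : Fin n → ℂ) {z : ℂ} (hz : z.re = 1) (i : Fin n) :
    ‖interpFamily u z i‖ = ‖u i‖ := by
  simp [norm_interpFamily, hz]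

lemma norm_interpFamily_le (u : Fin n → ℂ) {z : ℂ} (hz : z.re ∈ Set.Icc (0 : ℝ) 1) (i : Fin n) :
    ‖interpFamily u z i‖ ≤ ‖u i‖ * Real.exp |Real.log ‖u i‖| := by
  rw [norm_interpFamily]
  gcongr
  have := hz.1
  have := hz.2
  nlinarith [abs_nonneg (Real.log ‖u i‖), le_abs_self (Real.log ‖u i‖),
    neg_abs_le (Real.log ‖u i‖)]

lemma hasDerivAt_interpFamily (u : Fin n → ℂ) :
    HasDerivAt (interpFamily u) (fun i => -(Real.log ‖u i‖ : ℂ) * u i) 1 := by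
  refine hasDerivAt_pi.mpr fun i => ?_
  have h := ((((hasDerivAt_id (1 : ℂ)).const_sub 1).mul_const
    (Real.log ‖u i‖ : ℂ)).cexp).const_mul (u i)
  refine h.congr_deriv ?_
  simp only [id, sub_self, zero_mul, Complex.exp_zero]
  ring

lemma differentiable_interpFamily (u : Fin n → ℂ) : Differentiable ℂ (interpFamily u) :=
  differentiable_pi.mpr fun _ =>
    ((((differentiable_const 1).sub differentiable_id).mul_const _).cexp).const_mul _

noncomputable def interpPairing (τ : Fin m → ℝ) (F : (Fin n → ℂ) →ₗ[ℂ] (Fin m → ℂ))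
    (u : Fin n → ℂ) (w : Fin m → ℂ) (z : ℂ) : ℂ :=
  ∑ j, (τ j : ℂ) * F (interpFamily u z) j * interpFamily w z j

section interpPairing

variable {d : Fin n → ℝ} {τ : Fin m → ℝ} {F : (Fin n → ℂ) →ₗ[ℂ] (Fin m → ℂ)}
  (u : Fin n → ℂ) (w : Fin m → ℂ)

lemma norm_interpPairing_le (hτ : ∀ j, 0 ≤ τ j) (z : ℂ) :
    ‖interpPairing τ F u w z‖
      ≤ ∑ j, τ j * ‖F (interpFamily u z) j‖ * ‖interpFamily w z j‖ := by
  refine (norm_sum_le _ _).trans_eq (sum_congr rfl fun j _ => ?_)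
  rw [norm_mul, norm_mul, Complex.norm_real, Real.norm_of_nonneg (hτ j)]

lemma norm_interpPairing_le_one (hτ : ∀ j, 0 ≤ τ j) (hF1 : ∀ x, inorm (F x) ≤ wnorm d 1 x)
    (hu : ∑ i, d i * ‖u i‖ ^ 2 = 1) (hw : ∑ j, τ j * ‖w j‖ ^ 2 = 1) {z : ℂ} (hz : z.re = 0) :
    ‖interpPairing τ F u w z‖ ≤ 1 := by
  have hF : ∀ j, ‖F (interpFamily u z) j‖ ≤ 1 := fun j => by
    simpa only [norm_interpFamily_of_re_eq_zero u hz, hu]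
      using norm_apply_le_sum_of_inorm_le hF1 (interpFamily u z) j
  refine (norm_interpPairing_le u w hτ z).trans (hw.symm ▸ sum_le_sum fun j _ => ?_)
  rw [norm_interpFamily_of_re_eq_zero w hz]
  exact mul_le_mul_of_nonneg_right (mul_le_of_le_one_right (hτ j) (hF j)) (sq_nonneg _)

lemma norm_interpPairing_le_sqrt {G : (Fin m → ℂ) →ₗ[ℂ] (Fin n → ℂ)} {k : ℝ}
    (hτ : ∀ j, 0 ≤ τ j) (hadj : IsAdjointPair d τ F G) (hiso : ∀ y, G (F y) = (k : ℂ) • y)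
    (hu : ∑ i, d i * ‖u i‖ ^ 2 = 1) (hw : ∑ j, τ j * ‖w j‖ ^ 2 = 1) {z : ℂ} (hz : z.re = 1) :
    ‖interpPairing τ F u w z‖ ≤ √k := by
  have hplan : ∑ j, τ j * ‖F (interpFamily u z) j‖ ^ 2 = k := by
    rw [hadj.sum_mul_norm_sq hiso]
    simp only [norm_interpFamily_of_re_eq_one u hz, hu, mul_one]
  have hCS := Real.sum_sqrt_mul_sqrt_le univ
    (fun j => by positivity [hτ j] : ∀ j, 0 ≤ τ j * ‖F (interpFamily u z) j‖ ^ 2)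
    (fun j => by positivity [hτ j] : ∀ j, 0 ≤ τ j * ‖w j‖ ^ 2)
  rw [hplan, hw, Real.sqrt_one, mul_one] at hCS
  refine (norm_interpPairing_le u w hτ z).trans (le_of_eq_of_le (sum_congr rfl fun j _ => ?_) hCS)
  rw [norm_interpFamily_of_re_eq_one w hz, Real.sqrt_mul (hτ j), Real.sqrt_mul (hτ j),
    Real.sqrt_sq (norm_nonneg _), Real.sqrt_sq (norm_nonneg _)]
  linear_combination (‖F (interpFamily u z) j‖ * ‖w j‖) * (Real.mul_self_sqrt (hτ j)).symm

lemma bddAbove_norm_interpPairing (hd : ∀ i, 0 ≤ d i) (hτ : ∀ j, 0 ≤ τ j)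
    (hF1 : ∀ x, inorm (F x) ≤ wnorm d 1 x) :
    BddAbove ((norm ∘ interpPairing τ F u w) '' verticalClosedStrip 0 1) := by
  refine ⟨∑ j, τ j * (∑ i, d i * (‖u i‖ * Real.exp |Real.log ‖u i‖|))
    * (‖w j‖ * Real.exp |Real.log ‖w j‖|), ?_⟩
  rintro _ ⟨z, hz, rfl⟩
  refine (norm_interpPairing_le u w hτ z).trans (sum_le_sum fun j _ => ?_)
  have hF := (norm_apply_le_sum_of_inorm_le hF1 (interpFamily u z) j).trans
    (sum_le_sum fun i _ => mul_le_mul_of_nonneg_left (norm_interpFamily_le u hz i) (hd i))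
  have hw := norm_interpFamily_le w hz j
  gcongr
  · exact mul_nonneg (hτ j) (sum_nonneg fun i _ => by positivity [hd i])
  · exact hτ j

lemma differentiable_interpPairing : Differentiable ℂ (interpPairing τ F u w) := by
  have hF : Differentiable ℂ fun z => F (interpFamily u z) :=
    (LinearMap.toContinuousLinearMap F).differentiable.comp (differentiable_interpFamily u)
  exact Differentiable.fun_sum fun j _ =>
    ((differentiable_pi.mp hF j).const_mul _).mul
      (differentiable_pi.mp (differentiable_interpFamily w) j)

lemma hasDerivAt_interpPairing :
    HasDerivAt (interpPairing τ F u w)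
      (∑ j, ((τ j : ℂ) * F (fun i => -(Real.log ‖u i‖ : ℂ) * u i) j * w j
        + (τ j : ℂ) * F u j * (-(Real.log ‖w j‖ : ℂ) * w j))) 1 := by
  have hF : HasDerivAt (fun z => F (interpFamily u z)) (F fun i => -(Real.log ‖u i‖ : ℂ) * u i) 1 :=
    (LinearMap.toContinuousLinearMap F).hasFDerivAt.comp_hasDerivAt 1 (hasDerivAt_interpFamily u)
  refine HasDerivAt.fun_sum fun j _ => ?_
  have h := ((hasDerivAt_pi.mp hF j).const_mul (τ j : ℂ)).mul
    (hasDerivAt_pi.mp (hasDerivAt_interpFamily w) j)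
  simp only [interpFamily_one] at h
  exact h

lemma norm_interpPairing_le_sqrt_rpow {G : (Fin m → ℂ) →ₗ[ℂ] (Fin n → ℂ)} {k : ℝ}
    (hd : ∀ i, 0 ≤ d i) (hτ : ∀ j, 0 ≤ τ j) (hadj : IsAdjointPair d τ F G)
    (hF1 : ∀ x, inorm (F x) ≤ wnorm d 1 x) (hiso : ∀ y, G (F y) = (k : ℂ) • y)
    (hu : ∑ i, d i * ‖u i‖ ^ 2 = 1) (hw : ∑ j, τ j * ‖w j‖ ^ 2 = 1) {t : ℝ}
    (ht : t ∈ Set.Icc (0 : ℝ) 1) :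
    ‖interpPairing τ F u w t‖ ≤ √k ^ t := by
  have h := norm_le_interp_of_mem_verticalClosedStrip₀₁' (interpPairing τ F u w) (z := t)
    (by simpa [verticalClosedStrip] using ht) (differentiable_interpPairing u w).diffContOnCl
    (bddAbove_norm_interpPairing u w hd hτ hF1)
    (fun z hz => norm_interpPairing_le_one u w hτ hF1 hu hw hz)
    (fun z hz => norm_interpPairing_le_sqrt u w hτ hadj hiso hu hw hz)
  simpa using h

lemma interpPairing_conj_one {v : Fin m → ℂ} {s : ℝ} (hFu : F u = (s : ℂ) • v)
    (hv : ∑ j, τ j * ‖v j‖ ^ 2 = 1) :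
    interpPairing τ F u (fun j => (starRingEnd ℂ) (v j)) 1 = s := by
  have hterm : ∀ j, (τ j : ℂ) * F u j * (starRingEnd ℂ) (v j)
      = s * ((τ j * ‖v j‖ ^ 2 : ℝ) : ℂ) := fun j => by
    simp only [hFu, Pi.smul_apply, smul_eq_mul]
    push_cast
    linear_combination ((s : ℂ) * τ j) * Complex.mul_conj' (v j)
  simp only [interpPairing, interpFamily_one]
  rw [sum_congr rfl fun j _ => hterm j, ← mul_sum, ← Complex.ofReal_sum, hv, Complex.ofReal_one,
    mul_one]

lemma hasDerivAt_interpPairing_conj {G : (Fin m → ℂ) →ₗ[ℂ] (Fin n → ℂ)} {v : Fin m → ℂ} {s : ℝ}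
    (hadj : IsAdjointPair d τ F G) (hFu : F u = (s : ℂ) • v) (hGv : G v = (s : ℂ) • u) :
    HasDerivAt (interpPairing τ F u fun j => (starRingEnd ℂ) (v j))
      ((s * ((went d u + went τ v) / 2) : ℝ) : ℂ) 1 := by
  refine (hasDerivAt_interpPairing u _).congr_deriv ?_
  have hdual : ∑ j, (τ j : ℂ) * F (fun i => -(Real.log ‖u i‖ : ℂ) * u i) j * (starRingEnd ℂ) (v j)
      = s * ((went d u / 2 : ℝ) : ℂ) := by
    refine (hadj.sum_mul_conj _ v).trans ?_
    simp only [hGv, Pi.smul_apply, smul_eq_mul, map_mul, Complex.conj_ofReal]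
    rw [← sum_mul_neg_log_norm_mul_conj, mul_sum]
    exact sum_congr rfl fun i _ => by ring
  have hdirect : ∑ j, (τ j : ℂ) * F u j
        * (-(Real.log ‖(starRingEnd ℂ) (v j)‖ : ℂ) * (starRingEnd ℂ) (v j))
      = s * ((went τ v / 2 : ℝ) : ℂ) := by
    simp only [hFu, Complex.norm_conj, Pi.smul_apply, smul_eq_mul]
    rw [← sum_mul_neg_log_norm_mul_conj, mul_sum]
    exact sum_congr rfl fun j _ => by ring
  rw [sum_add_distrib, hdual, hdirect]
  push_cast
  ring

end interpPairing

lemma log_le_went_add_went {d : Fin n → ℝ} {τ : Fin m → ℝ} (hd : ∀ i, 0 ≤ d i)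
    (hτ : ∀ j, 0 ≤ τ j) {k : ℝ} (hk : 0 < k) {F : (Fin n → ℂ) →ₗ[ℂ] (Fin m → ℂ)}
    {G : (Fin m → ℂ) →ₗ[ℂ] (Fin n → ℂ)} (hadj : IsAdjointPair d τ F G)
    (hF1 : ∀ x, inorm (F x) ≤ wnorm d 1 x) (hiso : ∀ y, G (F y) = (k : ℂ) • y)
    {u : Fin n → ℂ} (hu : ∑ i, d i * ‖u i‖ ^ 2 = 1) :
    Real.log k ≤ went d u + went τ ((√k : ℂ)⁻¹ • F u) := by
  set s := √k
  set v := (s : ℂ)⁻¹ • F u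
  have hs : 0 < s := Real.sqrt_pos.mpr hk
  have hsC : (s : ℂ) ≠ 0 := Complex.ofReal_ne_zero.mpr hs.ne'
  have hFu : F u = (s : ℂ) • v := by rw [smul_inv_smul₀ hsC]
  have hGv : G v = (s : ℂ) • u := by
    rw [map_smul, hiso, smul_smul, ← Real.mul_self_sqrt hk.le, Complex.ofReal_mul,
      inv_mul_cancel_left₀ hsC]
  have hv : ∑ j, τ j * ‖v j‖ ^ 2 = 1 := (hadj.sum_mul_norm_sq_inv_sqrt_smul hiso hk u).trans hu
  have hw : ∑ j, τ j * ‖(starRingEnd ℂ) (v j)‖ ^ 2 = 1 := by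
    simpa only [Complex.norm_conj] using hv
  have h := mul_log_le_re_of_norm_le_rpow hs (hasDerivAt_interpPairing_conj u hadj hFu hGv)
    (interpPairing_conj_one u hFu hv)
    fun t ht => norm_interpPairing_le_sqrt_rpow u _ hd hτ hadj hF1 hiso hu hw ht
  rw [Complex.ofReal_re, Real.log_sqrt hk.le] at h
  nlinarith

theorem hirschman_beckner {d : Fin n → ℝ} {τ : Fin m → ℝ} (hd : ∀ i, 0 < d i)
    (hτ : ∀ j, 0 ≤ τ j) {k : ℝ} (hk : 0 < k) {F : (Fin n → ℂ) →ₗ[ℂ] (Fin m → ℂ)}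
    {G : (Fin m → ℂ) →ₗ[ℂ] (Fin n → ℂ)} (hadj : IsAdjointPair d τ F G)
    (hF1 : ∀ x, inorm (F x) ≤ wnorm d 1 x) (hiso : ∀ y, G (F y) = (k : ℂ) • y)
    {x : Fin n → ℂ} (hx : x ≠ 0) :
    -4 * Real.log (wnorm d 2 x)
      ≤ went d x / wnorm d 2 x ^ 2 + went τ (F x) / wnorm τ 2 (F x) ^ 2 := by
  have hN : 0 < wnorm d 2 x := wnorm_two_pos hd hx
  have hs : 0 < √k := Real.sqrt_pos.mpr hk
  have hN2 := wnorm_two_sq d (fun i => (hd i).le) x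
  set N := wnorm d 2 x
  set u : Fin n → ℂ := (N : ℂ)⁻¹ • x
  set v : Fin m → ℂ := (√k : ℂ)⁻¹ • F u
  have hxu : x = (N : ℂ) • u := (smul_inv_smul₀ (by exact_mod_cast hN.ne') x).symm
  have hFxv : F x = ((N * √k : ℝ) : ℂ) • v := by
    rw [hxu, map_smul, ← smul_inv_smul₀ (by exact_mod_cast hs.ne' : (√k : ℂ) ≠ 0) (F u),
      smul_smul]
    push_cast
    rfl
  have hu : ∑ i, d i * ‖u i‖ ^ 2 = 1 := by
    rw [hxu, sum_mul_norm_sq_smul] at hN2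
    exact mul_left_cancel₀ (pow_pos hN 2).ne' (hN2.symm.trans (mul_one _).symm)
  have hv : ∑ j, τ j * ‖v j‖ ^ 2 = 1 := (hadj.sum_mul_norm_sq_inv_sqrt_smul hiso hk u).trans hu
  have hM2 : wnorm τ 2 (F x) ^ 2 = (N * √k) ^ 2 := by
    rw [wnorm_two_sq τ hτ, hFxv, sum_mul_norm_sq_smul, hv, mul_one]
  have hwx : went d x = N ^ 2 * (went d u - Real.log (N ^ 2)) := by
    rw [hxu, went_smul, hu, mul_one]
  have hwFx : went τ (F x) = (N * √k) ^ 2 * (went τ v - Real.log ((N * √k) ^ 2)) := by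
    rw [hFxv, went_smul, hv, mul_one]
  have hcore := log_le_went_add_went (fun i => (hd i).le) hτ hk hadj hF1 hiso hu
  rw [hwx, hwFx, hM2, mul_div_cancel_left₀ _ (by positivity),
    mul_div_cancel_left₀ _ (by positivity),
    Real.log_pow, Real.log_pow, Real.log_mul hN.ne' hs.ne', Real.log_sqrt hk.le]
  push_cast
  linarith

theorem quantum_smooth_hirschman_beckner_general {n m : ℕ} (hn : 0 < n) (hm : 0 < m)
    (d : Fin n → ℝ) (τ : Fin m → ℝ) (hd : ∀ i, 0 < d i) (hτ : ∀ j, 0 < τ j)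
    (hd1 : ∀ i, 1 ≤ d i) (hτ1 : ∀ j, 1 ≤ τ j)
    (k : ℝ) (hk : 0 < k)
    (F : (Fin n → ℂ) →ₗ[ℂ] (Fin m → ℂ)) (G : (Fin m → ℂ) →ₗ[ℂ] (Fin n → ℂ))
    (hadj : IsAdjointPair d τ F G)
    (hF1 : ∀ x, inorm (F x) ≤ wnorm d 1 x)
    (hiso : ∀ y, G (F y) = (k : ℂ) • y)
    (x : Fin n → ℂ) (hx : x ≠ 0)
    (ε η : ℝ) (hε : ε ∈ Set.Icc (0:ℝ) 1) (hη : η ∈ Set.Icc (0:ℝ) 1)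
    (p q : ℝ) (hp : 1 ≤ p) (hq : 1 ≤ q) :
    smoothEnt d p ε x / (wnorm d 2 x) ^ 2 + smoothEnt τ q η (F x) / (wnorm τ 2 (F x)) ^ 2 ≥
      -4 * Real.log (wnorm d 2 x)
      - ((4 * (inorm x + 1) * Real.log (inorm x + 1) + 2 * (inorm x + 1)) / (wnorm d 2 x) ^ 2)
          * (⨅ i, d i) ^ (-(1 / p)) * (∑ i, d i) * ε
      - ((4 * (inorm (F x) + 1) * Real.log (inorm (F x) + 1) + 2 * (inorm (F x) + 1))
            / (wnorm τ 2 (F x)) ^ 2)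
          * (⨅ j, τ j) ^ (-(1 / q)) * (∑ j, τ j) * η := by
  have hHB := hirschman_beckner hd (fun j => (hτ j).le) hk hadj hF1 hiso hx
  have hx' := div_le_div_of_nonneg_right (went_sub_le_smoothEnt hn hd1 hp hε x)
    (sq_nonneg (wnorm d 2 x))
  have hFx' := div_le_div_of_nonneg_right (went_sub_le_smoothEnt hm hτ1 hq hη (F x))
    (sq_nonneg (wnorm τ 2 (F x)))
  rw [sub_div] at hx' hFx'
  simp only [div_mul_eq_mul_div, ge_iff_le]
  linarith

/-- Quantum smooth Hirschman-Beckner uncertainty principle,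
commutative finite-dimensional case. -/
theorem quantum_smooth_hirschman_beckner {n m : ℕ} (hn : 0 < n) (hm : 0 < m)
    (d : Fin n → ℝ) (τ : Fin m → ℝ) (hd : ∀ i, 0 < d i) (hτ : ∀ j, 0 < τ j)
    (hd1 : ∀ i, 1 ≤ d i) (hτ1 : ∀ j, 1 ≤ τ j)
    (k : ℝ) (hk : 0 < k)
    (F : (Fin n → ℂ) →ₗ[ℂ] (Fin m → ℂ)) (G : (Fin m → ℂ) →ₗ[ℂ] (Fin n → ℂ))
    (hadj : IsAdjointPair d τ F G)
    (hF1 : ∀ x, inorm (F x) ≤ wnorm d 1 x)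
    (hFk : ∀ x, k * inorm x ≤ inorm (G (F x)))
    (hiso : ∀ y, G (F y) = (k : ℂ) • y)
    (x : Fin n → ℂ) (hx : x ≠ 0)
    (ε η : ℝ) (hε : ε ∈ Set.Icc (0:ℝ) 1) (hη : η ∈ Set.Icc (0:ℝ) 1)
    (p q : ℝ) (hp : 1 ≤ p) (hq : 1 ≤ q) :
    smoothEnt d p ε x / (wnorm d 2 x) ^ 2 + smoothEnt τ q η (F x) / (wnorm τ 2 (F x)) ^ 2 ≥
      -4 * Real.log (wnorm d 2 x)
      - ((4 * (inorm x + 1) * Real.log (inorm x + 1) + 2 * (inorm x + 1)) / (wnorm d 2 x) ^ 2)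
          * (⨅ i, d i) ^ (-(1 / p)) * (∑ i, d i) * ε
      - ((4 * (inorm (F x) + 1) * Real.log (inorm (F x) + 1) + 2 * (inorm (F x) + 1))
            / (wnorm τ 2 (F x)) ^ 2)
          * (⨅ j, τ j) ^ (-(1 / q)) * (∑ j, τ j) * η :=
  quantum_smooth_hirschman_beckner_general hn hm d τ hd hτ hd1 hτ1 k hk F G hadj hF1 hiso x hx ε η
    hε hη p q hp hq
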